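/- arXiv:2001.01856 — 2 statements merged into one kernel-verified Lean document; each statement's English description precedes it below -/
import Mathlib

section
/- Let Ω ⊂ ℂⁿ be a bounded domain with Bergman kernel K and finite volume v(Ω). If K(z₀, z₀) = 1/v(Ω) for some z₀ ∈ Ω, then every function φ ∈ A²(Ω) which is orthogonal to the constant function 1 vanishes at z₀; consequently K(z, z₀) = 1/v(Ω) for all z ∈ Ω. -/
/-!
Reproducing the constant `1` and `K(·, z₀)` at `z₀`, with `K(z₀, w) = conj K(w, z₀)`, gives
`∫_Ω K(w, z₀) dw = 1` and `∫_Ω |K(w, z₀)|² dw = K(z₀, z₀) = 1/v(Ω)`. Expanding the square then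
yields `∫_Ω |K(w, z₀) - 1/v(Ω)|² dw = 0`, so `K(·, z₀)` is the constant `1/v(Ω)` almost
everywhere on `Ω`. Both claims follow by reproducing `φ` at `z₀` and `K(·, z₀)` at `z`.
-/

open MeasureTheory Metric Complex Filter

/-- The Bergman space of square-integrable holomorphic functions on `Ω ⊆ ℂⁿ`. -/
def BergmanSpace {n : ℕ} (Ω : Set (Fin n → ℂ)) : Set ((Fin n → ℂ) → ℂ) :=
  {f | DifferentiableOn ℂ f Ω ∧ MemLp f 2 (volume.restrict Ω)}

/-- `K` is the Bergman (reproducing) kernel of `Ω ⊆ ℂⁿ`. -/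
def IsBergmanKernel {n : ℕ} (Ω : Set (Fin n → ℂ)) (K : (Fin n → ℂ) → (Fin n → ℂ) → ℂ) : Prop :=
  (∀ w ∈ Ω, (fun z => K z w) ∈ BergmanSpace Ω) ∧
  (∀ z ∈ Ω, ∀ w ∈ Ω, K z w = (starRingEnd ℂ) (K w z)) ∧
  (∀ f ∈ BergmanSpace Ω, ∀ z ∈ Ω, f z = ∫ w in Ω, f w * K z w)

theorem MeasureTheory.MemLp.integrable_normSq {α : Type*} [MeasurableSpace α] {μ : Measure α}
    {g : α → ℂ} (hg : MemLp g 2 μ) : Integrable (fun x => normSq (g x)) μ := by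
  simpa only [Complex.normSq_eq_norm_sq] using (memLp_two_iff_integrable_sq_norm hg.1).mp hg

section FiniteMeasure

variable {α : Type*} [MeasurableSpace α] {μ : Measure α} [IsFiniteMeasure μ] {g : α → ℂ}

theorem integral_normSq_sub_ofReal (hg : MemLp g 2 μ) (c : ℝ) :
    ∫ x, normSq (g x - c) ∂μ =
      ∫ x, normSq (g x) ∂μ - 2 * c * (∫ x, g x ∂μ).re + c ^ 2 * μ.real Set.univ := by
  have hexpand : ∀ x, normSq (g x - c) = normSq (g x) - 2 * c * (g x).re + c ^ 2 := fun x => by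
    rw [Complex.normSq_sub, Complex.conj_ofReal, Complex.re_mul_ofReal, Complex.normSq_ofReal]
    ring
  have hre : Integrable (fun x => 2 * c * (g x).re) μ :=
    ((hg.integrable one_le_two).re).const_mul _
  have hdiff : Integrable (fun x => normSq (g x) - 2 * c * (g x).re) μ :=
    hg.integrable_normSq.sub hre
  simp_rw [hexpand]
  rw [integral_add hdiff (integrable_const _),
    integral_sub hg.integrable_normSq hre, integral_const_mul,
    show ∫ x, (g x).re ∂μ = (∫ x, g x ∂μ).re from integral_re (hg.integrable one_le_two),
    integral_const, smul_eq_mul, mul_comm (μ.real _)]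

/-- The equality case of Cauchy–Schwarz for `g` and `1`. -/
theorem ae_eq_const_of_integral_eq_one_of_integral_normSq_eq (hg : MemLp g 2 μ) {c : ℝ}
    (hc : μ.real Set.univ * c = 1) (hint : ∫ x, g x ∂μ = 1)
    (hnormSq : ∫ x, normSq (g x) ∂μ = c) : g =ᵐ[μ] fun _ => (c : ℂ) := by
  have hzero : ∫ x, normSq (g x - c) ∂μ = 0 := by
    rw [integral_normSq_sub_ofReal hg, hint, hnormSq, Complex.one_re]
    linear_combination c * hc
  have hsubIntegrable : Integrable (fun x => normSq (g x - c)) μ :=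
    (hg.sub (memLp_const (c : ℂ))).integrable_normSq
  filter_upwards [(integral_eq_zero_iff_of_nonneg (fun x => normSq_nonneg _) hsubIntegrable).mp hzero]
    with x hx
  exact sub_eq_zero.mp (normSq_eq_zero.mp hx)

end FiniteMeasure

section Bergman

variable {n : ℕ} {Ω : Set (Fin n → ℂ)}

theorem const_mem_bergmanSpace (hΩ : volume Ω ≠ ⊤) (a : ℂ) :
    (fun _ => a) ∈ BergmanSpace Ω :=
  have : IsFiniteMeasure (volume.restrict Ω) := isFiniteMeasure_restrict.mpr hΩ
  ⟨differentiableOn_const a, memLp_const a⟩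

namespace IsBergmanKernel

variable {K : (Fin n → ℂ) → (Fin n → ℂ) → ℂ} (hK : IsBergmanKernel Ω K) {z : Fin n → ℂ}
include hK

theorem setIntegral_right_eq_one (hΩ : volume Ω ≠ ⊤) (hz : z ∈ Ω) : ∫ w in Ω, K z w = 1 := by
  simpa using (hK.2.2 _ (const_mem_bergmanSpace hΩ 1) z hz).symm

theorem setIntegral_left_eq_one (hΩm : MeasurableSet Ω) (hΩ : volume Ω ≠ ⊤) (hz : z ∈ Ω) :
    ∫ w in Ω, K w z = 1 := by
  have hconj : ∫ w in Ω, K z w = ∫ w in Ω, starRingEnd ℂ (K w z) :=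
    setIntegral_congr_fun hΩm fun w hw => hK.2.1 z hz w hw
  have := hK.setIntegral_right_eq_one hΩ hz
  rw [hconj, integral_conj] at this
  simpa using congrArg (starRingEnd ℂ) this

theorem setIntegral_normSq_left (hΩm : MeasurableSet Ω) (hz : z ∈ Ω) :
    ((∫ w in Ω, normSq (K w z) : ℝ) : ℂ) = K z z := calc
  ((∫ w in Ω, normSq (K w z) : ℝ) : ℂ) = ∫ w in Ω, K w z * starRingEnd ℂ (K w z) := by
    rw [← integral_complex_ofReal]
    simp_rw [Complex.mul_conj]
  _ = ∫ w in Ω, K w z * K z w :=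
    setIntegral_congr_fun hΩm fun w hw => by rw [hK.2.1 z hz w hw]
  _ = K z z := (hK.2.2 _ (hK.1 z hz) z hz).symm

variable {z₀ : Fin n → ℂ} (hz₀ : z₀ ∈ Ω) {c : ℂ}
  (hflat : (fun w => K w z₀) =ᵐ[volume.restrict Ω] fun _ => c)
include hz₀ hflat

theorem apply_eq_setIntegral_mul_of_ae_eq_const (hΩm : MeasurableSet Ω) {φ : (Fin n → ℂ) → ℂ}
    (hφ : φ ∈ BergmanSpace Ω) : φ z₀ = (∫ w in Ω, φ w) * starRingEnd ℂ c := by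
  rw [hK.2.2 φ hφ z₀ hz₀, ← integral_mul_const]
  refine integral_congr_ae ?_
  filter_upwards [hflat, ae_restrict_mem hΩm] with w hw hwΩ
  rw [hK.2.1 z₀ hz₀ w hwΩ, hw]

theorem apply_eq_of_ae_eq_const (hΩ : volume Ω ≠ ⊤) (hz : z ∈ Ω) : K z z₀ = c := by
  rw [hK.2.2 _ (hK.1 z₀ hz₀) z hz, ← mul_one c, ← hK.setIntegral_right_eq_one hΩ hz,
    ← integral_const_mul]
  refine integral_congr_ae ?_
  filter_upwards [hflat] with w hw
  rw [hw]

end IsBergmanKernel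

end Bergman

theorem minimal_point_of_bergman_kernel_general {n : ℕ} (Ω : Set (Fin n → ℂ))
    (hΩo : IsOpen Ω) (hΩb : Bornology.IsBounded Ω)
    (K : (Fin n → ℂ) → (Fin n → ℂ) → ℂ) (hK : IsBergmanKernel Ω K)
    (z₀ : Fin n → ℂ) (hz₀ : z₀ ∈ Ω)
    (hmin : K z₀ z₀ = ((1 / (volume Ω).toReal : ℝ) : ℂ)) :
    (∀ φ ∈ BergmanSpace Ω, (∫ w in Ω, φ w) = 0 → φ z₀ = 0) ∧
    (∀ z ∈ Ω, K z z₀ = ((1 / (volume Ω).toReal : ℝ) : ℂ)) := by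
  have hΩm : MeasurableSet Ω := hΩo.measurableSet
  have hΩ : volume Ω ≠ ⊤ := hΩb.measure_lt_top.ne
  have : IsFiniteMeasure (volume.restrict Ω) := isFiniteMeasure_restrict.mpr hΩ
  have hvol : (volume.restrict Ω).real Set.univ * (1 / (volume Ω).toReal) = 1 := by
    rw [measureReal_restrict_apply_univ, measureReal_def,
      mul_one_div_cancel (ENNReal.toReal_pos (hΩo.measure_pos volume ⟨z₀, hz₀⟩).ne' hΩ).ne']
  have hflat : (fun w => K w z₀) =ᵐ[volume.restrict Ω] fun _ => _ :=
    ae_eq_const_of_integral_eq_one_of_integral_normSq_eq (hK.1 z₀ hz₀).2 hvol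
      (hK.setIntegral_left_eq_one hΩm hΩ hz₀)
      (Complex.ofReal_injective ((hK.setIntegral_normSq_left hΩm hz₀).trans hmin))
  refine ⟨fun φ hφ hφ1 => ?_, fun z hz => hK.apply_eq_of_ae_eq_const hz₀ hflat hΩ hz⟩
  rw [hK.apply_eq_setIntegral_mul_of_ae_eq_const hz₀ hflat hΩm hφ, hφ1, zero_mul]

/-- If the Bergman kernel of a bounded domain `Ω ⊆ ℂⁿ` attains the minimal value
`1/v(Ω)` on the diagonal at `z₀`, then every `φ ∈ A²(Ω)` orthogonal to the constant
function `1` vanishes at `z₀`, and `K(z, z₀) = 1/v(Ω)` for all `z ∈ Ω`. -/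
theorem minimal_point_of_bergman_kernel {n : ℕ} (Ω : Set (Fin n → ℂ))
    (hΩo : IsOpen Ω) (hΩc : IsConnected Ω) (hΩb : Bornology.IsBounded Ω)
    (K : (Fin n → ℂ) → (Fin n → ℂ) → ℂ) (hK : IsBergmanKernel Ω K)
    (z₀ : Fin n → ℂ) (hz₀ : z₀ ∈ Ω)
    (hmin : K z₀ z₀ = ((1 / (volume Ω).toReal : ℝ) : ℂ)) :
    (∀ φ ∈ BergmanSpace Ω, (∫ w in Ω, φ w) = 0 → φ z₀ = 0) ∧
    (∀ z ∈ Ω, K z z₀ = ((1 / (volume Ω).toReal : ℝ) : ℂ)) :=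
  minimal_point_of_bergman_kernel_general Ω hΩo hΩb K hK z₀ hz₀ hmin
end

section
/- Let X be a nonempty set and K: X × X → ℂ be a reproducing kernel for a Hilbert space of functions containing a nonzero constant function c, and suppose K(z₀, z₀) equals |c|²/⟨c,c⟩ (the minimal possible value). Then for every f in the Hilbert space orthogonal to c, f(z₀) = 0. -/
/-!
Since `‖k z₀‖² = K(z₀, z₀)` and `⟪c, k z₀⟫ = conj C₀`, the hypothesis on `K(z₀, z₀)` is the
equality case of Cauchy–Schwarz for `c` and `k z₀`. Hence `k z₀` is a multiple of `c`, and
`f(z₀) = ⟪k z₀, f⟫` vanishes whenever `f ⊥ c`.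
-/

open scoped InnerProductSpace

section CauchySchwarzEquality

variable {𝕜 E : Type*} [RCLike 𝕜] [NormedAddCommGroup E] [InnerProductSpace 𝕜 E]

-- For `c = 0` the right-hand side is `0 / 0 = 0`, which forces `k = 0`.
theorem exists_eq_smul_of_norm_sq_eq_norm_inner_sq_div {c k : E}
    (h : ‖k‖ ^ 2 = ‖⟪c, k⟫_𝕜‖ ^ 2 / ‖c‖ ^ 2) : ∃ r : 𝕜, k = r • c := by
  rcases eq_or_ne c 0 with rfl | hc
  · exact ⟨0, by simpa using h⟩
  · have hsq : ‖⟪c, k⟫_𝕜‖ ^ 2 = (‖c‖ * ‖k‖) ^ 2 := by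
      have : ‖c‖ ^ 2 ≠ 0 := by positivity
      rw [mul_pow, h]
      field_simp
    have heq : ‖⟪c, k⟫_𝕜‖ = ‖c‖ * ‖k‖ :=
      (pow_left_inj₀ (norm_nonneg _) (by positivity) two_ne_zero).mp hsq
    exact Or.resolve_left (((norm_inner_eq_norm_tfae 𝕜 c k).out 0 2).mp heq) hc

theorem inner_eq_zero_of_norm_sq_eq_norm_inner_sq_div {c k f : E}
    (h : ‖k‖ ^ 2 = ‖⟪c, k⟫_𝕜‖ ^ 2 / ‖c‖ ^ 2) (hf : ⟪c, f⟫_𝕜 = 0) : ⟪k, f⟫_𝕜 = 0 := by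
  obtain ⟨r, rfl⟩ := exists_eq_smul_of_norm_sq_eq_norm_inner_sq_div h
  rw [inner_smul_left, hf, mul_zero]

end CauchySchwarzEquality

theorem rkhs_orthogonal_to_constant_vanishes_general {X : Type*} {H : Type*}
    [NormedAddCommGroup H] [InnerProductSpace ℂ H]
    (ev : H →ₗ[ℂ] (X → ℂ))
    (K : X → X → ℂ) (k : X → H)
    (hk : ∀ w : X, ev (k w) = fun z => K z w)
    (hrep : ∀ (f : H) (w : X), (inner ℂ (k w) f : ℂ) = ev f w)
    (c : H) (C₀ : ℂ) (hc : ev c = fun _ => C₀)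
    (z₀ : X) (hmin : K z₀ z₀ = ((((‖C₀‖ : ℝ)) : ℂ)) ^ 2 / (inner ℂ c c : ℂ)) :
    ∀ f : H, (inner ℂ c f : ℂ) = 0 → ev f z₀ = 0 := by
  intro f hf
  have hkc : ‖⟪c, k z₀⟫_ℂ‖ = ‖C₀‖ := by
    rw [← norm_inner_symm, hrep, hc]
  have hkk : ‖k z₀‖ ^ 2 = ‖⟪c, k z₀⟫_ℂ‖ ^ 2 / ‖c‖ ^ 2 := by
    have hkk_complex : ((‖k z₀‖ ^ 2 : ℝ) : ℂ) = ((‖C₀‖ ^ 2 / ‖c‖ ^ 2 : ℝ) : ℂ) := by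
      push_cast
      calc ((‖k z₀‖ : ℝ) : ℂ) ^ 2 = ⟪k z₀, k z₀⟫_ℂ := (inner_self_eq_norm_sq_to_K (k z₀)).symm
        _ = K z₀ z₀ := by rw [hrep, hk]
        _ = ((‖C₀‖ : ℝ) : ℂ) ^ 2 / ((‖c‖ : ℝ) : ℂ) ^ 2 := by
          rw [hmin]
          exact congrArg _ (inner_self_eq_norm_sq_to_K c)
    rw [hkc]
    exact_mod_cast hkk_complex
  rw [← hrep, inner_eq_zero_of_norm_sq_eq_norm_inner_sq_div hkk hf]

/-- Abstract RKHS statement: let `H` be a Hilbert space of functions on `X` (realized via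
an injective linear evaluation map `ev`) with reproducing kernel `K`, represented by
`k : X → H` with `⟪k w, f⟫ = f(w)` (Mathlib inner products are conjugate-linear in the
first slot). If `H` contains a nonzero constant function `c ≡ C₀` and
`K(z₀, z₀) = |C₀|²/⟨c,c⟩`, then every `f ∈ H` orthogonal to `c` vanishes at `z₀`. -/
theorem rkhs_orthogonal_to_constant_vanishes {X : Type*} {H : Type*}
    [NormedAddCommGroup H] [InnerProductSpace ℂ H] [CompleteSpace H]
    (ev : H →ₗ[ℂ] (X → ℂ)) (hinj : Function.Injective ev)
    (K : X → X → ℂ) (k : X → H)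
    (hk : ∀ w : X, ev (k w) = fun z => K z w)
    (hrep : ∀ (f : H) (w : X), (inner ℂ (k w) f : ℂ) = ev f w)
    (c : H) (C₀ : ℂ) (hC₀ : C₀ ≠ 0) (hc : ev c = fun _ => C₀)
    (z₀ : X) (hmin : K z₀ z₀ = ((((‖C₀‖ : ℝ)) : ℂ)) ^ 2 / (inner ℂ c c : ℂ)) :
    ∀ f : H, (inner ℂ c f : ℂ) = 0 → ev f z₀ = 0 :=
  rkhs_orthogonal_to_constant_vanishes_general ev K k hk hrep c C₀ hc z₀ hmin
end
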